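/- arXiv:2012.03244 — 11 statements merged into one kernel-verified Lean document; each statement's English description precedes it below -/
import Mathlib

section
/- Let μ be the exponential probability distribution on ℝ with rate 1 (density e^{−y} for y ≥ 0). For τ ∈ ℝ define the false alarm probability P_FA(τ) = μ{y : σ² + P_r·w + P_r·m·y > τ} and the miss detection probability P_MD(τ) = μ{y : σ² + (P_r+P_b)·w + (P_r+P_b)·m·y < τ}. Then for every τ ∈ ℝ one has P_FA(τ) + P_MD(τ) = ξ_dl(τ). -/
open MeasureTheory ProbabilityTheory Real

/-- `ν₁(τ)` of the paper (eq. (14)). -/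
noncomputable def nu1 (Pr m w σ2 τ : ℝ) : ℝ :=
  Real.exp ((σ2 + Pr * w - τ) / (Pr * m))

/-- `ν₂(τ)` of the paper (eq. (15)). -/
noncomputable def nu2 (Pr Pb m w σ2 τ : ℝ) : ℝ :=
  Real.exp ((σ2 + (Pr + Pb) * w - τ) / ((Pr + Pb) * m))

/-- The downlink detection error probability `ξ_{w,dl}(τ)` of the paper (eq. (17)). -/
noncomputable def xiDl (Pr Pb m w σ2 τ : ℝ) : ℝ :=
  if τ < σ2 + Pr * w then 1
  else if τ ≤ σ2 + (Pr + Pb) * w then nu1 Pr m w σ2 τ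
  else 1 + nu1 Pr m w σ2 τ - nu2 Pr Pb m w σ2 τ

/-!
Scaling the exponential variable turns the false alarm and the miss detection events into a
right and a left tail of `expMeasure 1`, whose survival function is `exp (-x)` for `x ≥ 0`.
Since `σ² + P_r w ≤ σ² + (P_r + P_b) w`, adding the two tails produces the three cases of `ξ_dl`.
-/

namespace ProbabilityTheory

open Set

variable {r : ℝ}

instance : NullSingletonClass (expMeasure r) :=
  inferInstanceAs (NullSingletonClass (volume.withDensity (gammaPDF 1 r)))

-- Split at `x ≤ 0` (both branches vanish at `0`) to match the non-strict case of `ξ_dl`.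
lemma expMeasure_real_Iio (hr : 0 < r) (x : ℝ) :
    (expMeasure r).real (Iio x) = if x ≤ 0 then 0 else 1 - exp (-(r * x)) := by
  have := isProbabilityMeasure_expMeasure hr
  rw [measureReal_congr Iio_ae_eq_Iic, ← cdf_eq_real (expMeasure r) x,
    cdf_expMeasure_eq hr]
  split_ifs with h₀ h₁ h₁
  · simp [le_antisymm h₁ h₀]
  · rfl
  · rfl
  · exact absurd (le_of_lt (not_le.1 h₀)) h₁

lemma expMeasure_real_Ioi (hr : 0 < r) (x : ℝ) :
    (expMeasure r).real (Ioi x) = if x < 0 then 1 else exp (-(r * x)) := by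
  have := isProbabilityMeasure_expMeasure hr
  rw [← compl_Iic, probReal_compl_eq_one_sub measurableSet_Iic, ← cdf_eq_real,
    cdf_expMeasure_eq hr]
  split_ifs with h₀ h₁ h₁
  · exact absurd h₀ (not_le.2 h₁)
  · ring
  · ring
  · exact absurd (not_lt.1 h₁) h₀

end ProbabilityTheory

lemma setOf_lt_add_mul_eq_Ioi {a c τ : ℝ} (hc : 0 < c) :
    {y : ℝ | a + c * y > τ} = Set.Ioi ((τ - a) / c) := by
  ext y
  change τ < a + c * y ↔ (τ - a) / c < y
  rw [div_lt_iff₀ hc]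
  constructor <;> intro h <;> linarith

lemma setOf_add_mul_lt_eq_Iio {a c τ : ℝ} (hc : 0 < c) :
    {y : ℝ | a + c * y < τ} = Set.Iio ((τ - a) / c) := by
  ext y
  change a + c * y < τ ↔ y < (τ - a) / c
  rw [lt_div_iff₀ hc]
  constructor <;> intro h <;> linarith

lemma expMeasure_one_real_setOf_lt_add_mul {a c τ : ℝ} (hc : 0 < c) :
    (expMeasure 1).real {y : ℝ | a + c * y > τ} = if τ < a then 1 else exp ((a - τ) / c) := by
  rw [setOf_lt_add_mul_eq_Ioi hc, expMeasure_real_Ioi one_pos, one_mul, ← neg_div, neg_sub]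
  simp only [div_lt_iff₀ hc, zero_mul, sub_neg]

lemma expMeasure_one_real_setOf_add_mul_lt {a c τ : ℝ} (hc : 0 < c) :
    (expMeasure 1).real {y : ℝ | a + c * y < τ} =
      if τ ≤ a then 0 else 1 - exp ((a - τ) / c) := by
  rw [setOf_add_mul_lt_eq_Iio hc, expMeasure_real_Iio one_pos, one_mul, ← neg_div, neg_sub]
  simp only [div_le_iff₀ hc, zero_mul, sub_nonpos]

theorem falseAlarm_add_missDetection_eq_xiDl_general
    (Pr Pb m w σ2 : ℝ) (hPr : 0 < Pr) (hPb : 0 < Pb) (hm : 0 < m)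
    (hw : 0 ≤ w) :
    ∀ τ : ℝ,
      ((expMeasure 1) {y : ℝ | σ2 + Pr * w + Pr * m * y > τ}).toReal +
        ((expMeasure 1) {y : ℝ | σ2 + (Pr + Pb) * w + (Pr + Pb) * m * y < τ}).toReal =
      xiDl Pr Pb m w σ2 τ := by
  intro τ
  have hle : σ2 + Pr * w ≤ σ2 + (Pr + Pb) * w := by gcongr; linarith
  rw [← measureReal_def, ← measureReal_def,
    expMeasure_one_real_setOf_lt_add_mul (mul_pos hPr hm),
    expMeasure_one_real_setOf_add_mul_lt (mul_pos (add_pos hPr hPb) hm), xiDl, nu1, nu2]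
  split_ifs <;> first | (exfalso; linarith) | ring

/-- Equations (14), (15), (17) of the paper: with the reflected channel gain
exponentially distributed, the false alarm probability plus the miss detection
probability equals the piecewise detection error probability `ξ_dl`. -/
theorem falseAlarm_add_missDetection_eq_xiDl
    (Pr Pb m w σ2 : ℝ) (hPr : 0 < Pr) (hPb : 0 < Pb) (hm : 0 < m)
    (hw : 0 ≤ w) (hσ2 : 0 ≤ σ2) :
    ∀ τ : ℝ,
      ((expMeasure 1) {y : ℝ | σ2 + Pr * w + Pr * m * y > τ}).toReal +
        ((expMeasure 1) {y : ℝ | σ2 + (Pr + Pb) * w + (Pr + Pb) * m * y < τ}).toReal =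
      xiDl Pr Pb m w σ2 τ :=
  falseAlarm_add_missDetection_eq_xiDl_general Pr Pb m w σ2 hPr hPb hm hw
end

section
/- Set κ = (P_r+P_b)/P_r and define τ* = σ² + (P_r+P_b)·w if w ≥ (P_r·m/P_b)·ln κ, and τ* = σ² + (P_r·(P_r+P_b)·m/P_b)·ln κ otherwise. Then τ* is a global minimizer of the downlink detection error probability: ξ_dl(τ*) ≤ ξ_dl(τ) for every τ ∈ ℝ. -/
/-! On `[σ² + (P_r+P_b) w, ∞)` (where `ν₂ ≤ 1`) `ξ_dl = 1 + ν₁ - ν₂` is a difference of two decaying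
exponentials, the faster one with scale `P_r m`. Its derivative `ν₂/((P_r+P_b) m) - ν₁/(P_r m)` changes
sign once, from negative to positive, at the point where the two terms agree, which is
`σ² + (P_r (P_r+P_b) m / P_b) ln κ`; so on that half-line the minimum sits at the larger of this point and
the left end, i.e. at `τ*`. Left of the end `ξ_dl` is `1` or the decreasing `ν₁`, hence at least
`ν₁(σ² + (P_r+P_b) w)`, its value at the end. -/

open Real

open Set

lemma apply_max_le_of_antitoneOn_Iic_of_monotoneOn_Ici {α β : Type*} [LinearOrder α] [Preorder β]
    {f : α → β} {a b s : α} (hanti : AntitoneOn f (Iic a)) (hmono : MonotoneOn f (Ici a))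
    (hs : b ≤ s) : f (max b a) ≤ f s := by
  rcases le_total b a with hba | hab
  · rw [max_eq_right hba]
    rcases le_total s a with hsa | has
    · exact hanti hsa self_mem_Iic hsa
    · exact hmono self_mem_Ici has has
  · rw [max_eq_left hab]
    exact hmono hab (hab.trans hs) hs

section ExpGap

variable {p q c d t₀ t : ℝ}

lemma hasDerivAt_exp_sub_div (c p t : ℝ) :
    HasDerivAt (fun t => exp ((c - t) / p)) (-(exp ((c - t) / p) / p)) t := by
  convert (((hasDerivAt_id' t).const_sub c).div_const p).exp using 1
  ring

lemma exp_sub_div_div_eq (c p t₀ t : ℝ) :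
    exp ((c - t) / p) / p = exp ((c - t₀) / p) / p * exp ((t₀ - t) / p) := by
  rw [div_mul_eq_mul_div, ← exp_add]
  ring_nf

lemma exp_sub_div_div_le_of_le (hp : 0 < p) (hpq : p ≤ q)
    (h₀ : exp ((c - t₀) / p) / p = exp ((d - t₀) / q) / q) (ht : t₀ ≤ t) :
    exp ((c - t) / p) / p ≤ exp ((d - t) / q) / q := by
  have hq : 0 < q := hp.trans_le hpq
  rw [exp_sub_div_div_eq c p t₀, exp_sub_div_div_eq d q t₀, h₀]
  have : (t₀ - t) / p ≤ (t₀ - t) / q := by rw [div_le_div_iff₀ hp hq]; nlinarith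
  gcongr

lemma exp_sub_div_div_le_of_ge (hp : 0 < p) (hpq : p ≤ q)
    (h₀ : exp ((c - t₀) / p) / p = exp ((d - t₀) / q) / q) (ht : t ≤ t₀) :
    exp ((d - t) / q) / q ≤ exp ((c - t) / p) / p := by
  have hq : 0 < q := hp.trans_le hpq
  rw [exp_sub_div_div_eq c p t₀, exp_sub_div_div_eq d q t₀, h₀]
  have : (t₀ - t) / q ≤ (t₀ - t) / p := by rw [div_le_div_iff₀ hq hp]; nlinarith
  gcongr

lemma monotoneOn_exp_sub_div_sub (hp : 0 < p) (hpq : p ≤ q)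
    (h₀ : exp ((c - t₀) / p) / p = exp ((d - t₀) / q) / q) :
    MonotoneOn (fun t => exp ((c - t) / p) - exp ((d - t) / q)) (Ici t₀) :=
  monotoneOn_of_hasDerivWithinAt_nonneg (convex_Ici t₀) (by fun_prop)
    (fun t _ => ((hasDerivAt_exp_sub_div c p t).sub (hasDerivAt_exp_sub_div d q t)).hasDerivWithinAt)
    (fun t ht => by
      rw [interior_Ici] at ht
      linarith [exp_sub_div_div_le_of_le hp hpq h₀ (le_of_lt ht)])

lemma antitoneOn_exp_sub_div_sub (hp : 0 < p) (hpq : p ≤ q)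
    (h₀ : exp ((c - t₀) / p) / p = exp ((d - t₀) / q) / q) :
    AntitoneOn (fun t => exp ((c - t) / p) - exp ((d - t) / q)) (Iic t₀) :=
  antitoneOn_of_hasDerivWithinAt_nonpos (convex_Iic t₀) (by fun_prop)
    (fun t _ => ((hasDerivAt_exp_sub_div c p t).sub (hasDerivAt_exp_sub_div d q t)).hasDerivWithinAt)
    (fun t ht => by
      rw [interior_Iic] at ht
      linarith [exp_sub_div_div_le_of_ge hp hpq h₀ (le_of_lt ht)])

end ExpGap

section DetectionError

variable {Pr Pb m w σ2 τ : ℝ}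

lemma nu2_self : nu2 Pr Pb m w σ2 (σ2 + (Pr + Pb) * w) = 1 := by
  simp [nu2]

lemma xiDl_eq_of_le (hPb : 0 ≤ Pb) (hw : 0 ≤ w) (hτ : σ2 + (Pr + Pb) * w ≤ τ) :
    xiDl Pr Pb m w σ2 τ = 1 + nu1 Pr m w σ2 τ - nu2 Pr Pb m w σ2 τ := by
  rw [xiDl, if_neg (by nlinarith)]
  split_ifs with h
  · obtain rfl := le_antisymm h hτ
    rw [nu2_self]
    ring
  · rfl

lemma nu1_le_xiDl_of_le (hPr : 0 < Pr) (hm : 0 < m) (hPb : 0 ≤ Pb) (hw : 0 ≤ w)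
    (hτ : τ ≤ σ2 + (Pr + Pb) * w) :
    nu1 Pr m w σ2 (σ2 + (Pr + Pb) * w) ≤ xiDl Pr Pb m w σ2 τ := by
  rw [xiDl]
  split_ifs with h₁
  · exact exp_le_one_iff.2 (div_nonpos_of_nonpos_of_nonneg (by nlinarith) (by positivity))
  · exact exp_le_exp.2 (div_le_div_of_nonneg_right (by linarith) (by positivity))

/-- The zero of the derivative of `1 + ν₁ - ν₂`. -/
noncomputable def criticalThreshold (Pr Pb m σ2 : ℝ) : ℝ :=
  σ2 + (Pr * (Pr + Pb) * m / Pb) * log ((Pr + Pb) / Pr)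

lemma nu1_div_eq_nu2_div_criticalThreshold (hPr : 0 < Pr) (hPb : 0 < Pb) (hm : 0 < m) :
    nu1 Pr m w σ2 (criticalThreshold Pr Pb m σ2) / (Pr * m)
      = nu2 Pr Pb m w σ2 (criticalThreshold Pr Pb m σ2) / ((Pr + Pb) * m) := by
  have hexp : (σ2 + (Pr + Pb) * w - criticalThreshold Pr Pb m σ2) / ((Pr + Pb) * m)
      = (σ2 + Pr * w - criticalThreshold Pr Pb m σ2) / (Pr * m) + log ((Pr + Pb) / Pr) := by
    rw [criticalThreshold]
    field_simp
    ring
  rw [nu2, hexp, exp_add, exp_log (by positivity), nu1]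
  field_simp

end DetectionError

theorem optimal_threshold_minimizes_xiDl_general
    (Pr Pb m w σ2 : ℝ) (hPr : 0 < Pr) (hPb : 0 < Pb) (hm : 0 < m)
    (hw : 0 ≤ w) :
    let κ : ℝ := (Pr + Pb) / Pr
    let τstar : ℝ :=
      if w ≥ (Pr * m / Pb) * Real.log κ then σ2 + (Pr + Pb) * w
      else σ2 + (Pr * (Pr + Pb) * m / Pb) * Real.log κ
    ∀ τ : ℝ, xiDl Pr Pb m w σ2 τstar ≤ xiDl Pr Pb m w σ2 τ := by
  intro κ τstar τ
  set B := σ2 + (Pr + Pb) * w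
  set τ₀ := criticalThreshold Pr Pb m σ2
  have hτstar : τstar = max B τ₀ := by
    have hB : B - τ₀ = (Pr + Pb) * (w - (Pr * m / Pb) * log κ) := by
      simp only [B, τ₀, κ, criticalThreshold]; ring
    simp only [τstar]
    split_ifs with h
    · exact (max_eq_left (b := τ₀) (by nlinarith)).symm
    · exact (max_eq_right (a := B) (b := τ₀) (by nlinarith)).symm
  have hpq : Pr * m ≤ (Pr + Pb) * m := by nlinarith
  have hcrit := nu1_div_eq_nu2_div_criticalThreshold (w := w) (σ2 := σ2) hPr hPb hm
  have hmin : ∀ s, B ≤ s → xiDl Pr Pb m w σ2 (max B τ₀) ≤ xiDl Pr Pb m w σ2 s := fun s hs => by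
    rw [xiDl_eq_of_le hPb.le hw (le_max_left _ _), xiDl_eq_of_le hPb.le hw hs]
    have := apply_max_le_of_antitoneOn_Iic_of_monotoneOn_Ici
      (antitoneOn_exp_sub_div_sub (by positivity) hpq hcrit)
      (monotoneOn_exp_sub_div_sub (by positivity) hpq hcrit) hs
    simp only [nu1, nu2] at this ⊢
    linarith
  rw [hτstar]
  rcases le_total B τ with hτ | hτ
  · exact hmin τ hτ
  · calc xiDl Pr Pb m w σ2 (max B τ₀) ≤ xiDl Pr Pb m w σ2 B := hmin B le_rfl
      _ = nu1 Pr m w σ2 B := by rw [xiDl_eq_of_le hPb.le hw le_rfl, nu2_self]; ring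
      _ ≤ xiDl Pr Pb m w σ2 τ := nu1_le_xiDl_of_le hPr hm hPb.le hw hτ

/-- Theorem 1 of the paper: the optimal detection threshold `τ*` globally minimizes the
downlink detection error probability. -/
theorem optimal_threshold_minimizes_xiDl
    (Pr Pb m w σ2 : ℝ) (hPr : 0 < Pr) (hPb : 0 < Pb) (hm : 0 < m)
    (hw : 0 ≤ w) (hσ2 : 0 ≤ σ2) :
    let κ : ℝ := (Pr + Pb) / Pr
    let τstar : ℝ :=
      if w ≥ (Pr * m / Pb) * Real.log κ then σ2 + (Pr + Pb) * w
      else σ2 + (Pr * (Pr + Pb) * m / Pb) * Real.log κ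
    ∀ τ : ℝ, xiDl Pr Pb m w σ2 τstar ≤ xiDl Pr Pb m w σ2 τ :=
  optimal_threshold_minimizes_xiDl_general Pr Pb m w σ2 hPr hPb hm hw
end

section
/- Set κ = (P_r+P_b)/P_r and define τ* = σ² + (P_r+P_b)·w if w ≥ (P_r·m/P_b)·ln κ, and τ* = σ² + (P_r·(P_r+P_b)·m/P_b)·ln κ otherwise. Then ξ_dl(τ*) = exp(−P_b·w/(P_r·m)) if w ≥ (P_r·m/P_b)·ln κ, and ξ_dl(τ*) = 1 − (P_b/P_r)·κ^{−(P_r+P_b)/P_b}·exp(w/m) otherwise. -/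
open Real

/-! At `τ* = σ² + (P_r + P_b)·c` with `c = (P_r·m/P_b)·ln κ`, both exponentials factor as
`exp (w/m)` times a power of `κ`, namely `κ^(-(P_r+P_b)/P_b)` and `κ^(-P_r/P_b)`; these differ by
the factor `κ`, and `1 - κ = -P_b/P_r`. When `w ≥ c` the threshold is the right end of the middle
branch instead, where only `ν₁` enters. -/

section

variable {Pr Pb m w σ2 τ : ℝ}

lemma xiDl_of_le_of_le (h₁ : σ2 + Pr * w ≤ τ) (h₂ : τ ≤ σ2 + (Pr + Pb) * w) :
    xiDl Pr Pb m w σ2 τ = nu1 Pr m w σ2 τ := by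
  rw [xiDl, if_neg h₁.not_gt, if_pos h₂]

lemma xiDl_of_le_of_lt (h₁ : σ2 + Pr * w ≤ τ) (h₂ : σ2 + (Pr + Pb) * w < τ) :
    xiDl Pr Pb m w σ2 τ = 1 + nu1 Pr m w σ2 τ - nu2 Pr Pb m w σ2 τ := by
  rw [xiDl, if_neg h₁.not_gt, if_neg h₂.not_ge]

lemma nu1_add_mul_self : nu1 Pr m w σ2 (σ2 + (Pr + Pb) * w) = exp (-(Pb * w) / (Pr * m)) := by
  rw [nu1]
  ring_nf

lemma xiDl_add_mul_self (hPb : 0 ≤ Pb) (hw : 0 ≤ w) :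
    xiDl Pr Pb m w σ2 (σ2 + (Pr + Pb) * w) = exp (-(Pb * w) / (Pr * m)) := by
  rw [xiDl_of_le_of_le (by nlinarith) le_rfl, nu1_add_mul_self]

lemma nu1_add (hPr : Pr ≠ 0) (s : ℝ) :
    nu1 Pr m w σ2 (σ2 + s) = exp (w / m) * exp (-s / (Pr * m)) := by
  rw [nu1, ← exp_add]
  field_simp
  ring_nf

lemma nu2_add (hPrPb : Pr + Pb ≠ 0) (s : ℝ) :
    nu2 Pr Pb m w σ2 (σ2 + s) = exp (w / m) * exp (-s / ((Pr + Pb) * m)) := by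
  rw [nu2, ← exp_add]
  field_simp
  ring_nf

lemma rpow_neg_div_sub_rpow_neg_add_div (hPr : 0 < Pr) (hPb : 0 < Pb) :
    ((Pr + Pb) / Pr) ^ (-(Pr / Pb)) - ((Pr + Pb) / Pr) ^ (-((Pr + Pb) / Pb)) =
      Pb / Pr * ((Pr + Pb) / Pr) ^ (-((Pr + Pb) / Pb)) := by
  have hexp : -(Pr / Pb) = -((Pr + Pb) / Pb) + 1 := by field_simp; ring
  rw [hexp, rpow_add_one (by positivity)]
  field_simp
  ring

lemma log_add_div_self_pos (hPr : 0 < Pr) (hPb : 0 < Pb) : 0 < log ((Pr + Pb) / Pr) :=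
  log_pos ((one_lt_div hPr).2 (by linarith))

lemma xiDl_of_lt_threshold (hPr : 0 < Pr) (hPb : 0 < Pb) (hm : 0 < m)
    (hw : w < Pr * m / Pb * log ((Pr + Pb) / Pr)) :
    xiDl Pr Pb m w σ2 (σ2 + Pr * (Pr + Pb) * m / Pb * log ((Pr + Pb) / Pr)) =
      1 - Pb / Pr * ((Pr + Pb) / Pr) ^ (-((Pr + Pb) / Pb)) * exp (w / m) := by
  set κ := (Pr + Pb) / Pr
  have hκ : 0 < κ := by positivity
  have hlog : 0 < log κ := log_add_div_self_pos hPr hPb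
  have hτ : Pr * (Pr + Pb) * m / Pb * log κ = (Pr + Pb) * (Pr * m / Pb * log κ) := by ring
  have hτ₂ : σ2 + (Pr + Pb) * w < σ2 + Pr * (Pr + Pb) * m / Pb * log κ := by
    rw [hτ]
    gcongr
  have hτ₁ : σ2 + Pr * w ≤ σ2 + Pr * (Pr + Pb) * m / Pb * log κ := by
    have hc : 0 < Pr * m / Pb * log κ := by positivity
    rw [hτ]
    gcongr σ2 + ?_
    calc Pr * w ≤ Pr * (Pr * m / Pb * log κ) := by gcongr
      _ ≤ (Pr + Pb) * (Pr * m / Pb * log κ) := by gcongr; linarith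
  have hν₁ : exp (-(Pr * (Pr + Pb) * m / Pb * log κ) / (Pr * m)) = κ ^ (-((Pr + Pb) / Pb)) := by
    rw [rpow_def_of_pos hκ]
    congr 1
    field_simp
  have hν₂ : exp (-(Pr * (Pr + Pb) * m / Pb * log κ) / ((Pr + Pb) * m)) = κ ^ (-(Pr / Pb)) := by
    rw [rpow_def_of_pos hκ]
    congr 1
    field_simp
  rw [xiDl_of_le_of_lt hτ₁ hτ₂, nu1_add hPr.ne', nu2_add (by positivity), hν₁, hν₂,
    ← rpow_neg_div_sub_rpow_neg_add_div hPr hPb]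
  ring

end

theorem xiDl_at_optimal_threshold_general
    (Pr Pb m w σ2 : ℝ) (hPr : 0 < Pr) (hPb : 0 < Pb) (hm : 0 < m) :
    let κ : ℝ := (Pr + Pb) / Pr
    let τstar : ℝ :=
      if w ≥ (Pr * m / Pb) * Real.log κ then σ2 + (Pr + Pb) * w
      else σ2 + (Pr * (Pr + Pb) * m / Pb) * Real.log κ
    xiDl Pr Pb m w σ2 τstar =
      if w ≥ (Pr * m / Pb) * Real.log κ then Real.exp (-(Pb * w) / (Pr * m))
      else 1 - (Pb / Pr) * κ ^ (-((Pr + Pb) / Pb)) * Real.exp (w / m) := by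
  intro κ τstar
  by_cases hw : w ≥ (Pr * m / Pb) * Real.log κ
  · have hc : 0 < Pr * m / Pb * log κ := by
      have := log_add_div_self_pos hPr hPb
      positivity
    simp only [τstar, if_pos hw]
    exact xiDl_add_mul_self hPb.le (hc.le.trans hw)
  · simp only [τstar, if_neg hw]
    exact xiDl_of_lt_threshold hPr hPb hm (not_le.1 hw)

/-- Equation (18) of the paper: the value of the downlink detection error probability at
the optimal detection threshold `τ*` of Theorem 1. -/
theorem xiDl_at_optimal_threshold
    (Pr Pb m w σ2 : ℝ) (hPr : 0 < Pr) (hPb : 0 < Pb) (hm : 0 < m)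
    (hw : 0 ≤ w) (hσ2 : 0 ≤ σ2) :
    let κ : ℝ := (Pr + Pb) / Pr
    let τstar : ℝ :=
      if w ≥ (Pr * m / Pb) * Real.log κ then σ2 + (Pr + Pb) * w
      else σ2 + (Pr * (Pr + Pb) * m / Pb) * Real.log κ
    xiDl Pr Pb m w σ2 τstar =
      if w ≥ (Pr * m / Pb) * Real.log κ then Real.exp (-(Pb * w) / (Pr * m))
      else 1 - (Pb / Pr) * κ ^ (-((Pr + Pb) / Pb)) * Real.exp (w / m) :=
  xiDl_at_optimal_threshold_general Pr Pb m w σ2 hPr hPb hm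
end

section
/- Let α = P_b·φ₁/(P_r·N), κ = (P_r+P_b)/P_r, and T = (P_r·N/(P_b·φ₁))·ln κ. Define ξ* : [0,∞) → ℝ by ξ*(h) = exp(−α·h) for h ≥ T, and ξ*(h) = 1 − (P_b/P_r)·κ^{−(P_r+P_b)/P_b}·exp(φ₁·h/N) for 0 ≤ h < T. Then ∫₀^∞ ξ*(h)·e^{−h} dh = F_dl(P_r, P_b). -/
/-!
On `(0, T)` the integrand `ξ*(h) e^{-h}` is `e^{-h} - c e^{(φ₁/N - 1) h}`, with
`c = (P_b/P_r) κ^{-(P_r+P_b)/P_b}`, and on `[T, ∞)` it is `e^{-(α + 1) h}`, so both pieces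
integrate in closed form. Since `T = (P_r N / (P_b φ₁)) log κ`, each `exp (k T)` is the power
`κ ^ (k P_r N / (P_b φ₁))`, which gives the terms of `F_dl`.
-/

open Real MeasureTheory

/-- The closed-form minimum average detection error probability of Theorem 2 of the paper
(eq. (19)). -/
noncomputable def Fdl (Pr Pb φ1 N : ℝ) : ℝ :=
  ((Pr + Pb) / Pr) ^ (-(1 + Pr * N / (Pb * φ1))) / (Pb * φ1 / (Pr * N) + 1) + 1 -
    ((Pr + Pb) / Pr) ^ (-(Pr * N / (Pb * φ1))) -
    ((Pb / Pr) * ((Pr + Pb) / Pr) ^ (-((Pr + Pb) / Pb)) / (φ1 / N - 1)) *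
      (((Pr + Pb) / Pr) ^ ((Pr / Pb) * (1 - N / φ1)) - 1)

open Set

theorem integral_Ioi_ite_le {E : Type*} [NormedAddCommGroup E] [NormedSpace ℝ E]
    {f g : ℝ → E} {a T : ℝ} (haT : a ≤ T) (hg : IntervalIntegrable g volume a T)
    (hf : IntegrableOn f (Ioi T)) :
    ∫ x in Ioi a, (if T ≤ x then f x else g x) = (∫ x in a..T, g x) + ∫ x in Ioi T, f x := by
  have head : EqOn (fun x => if T ≤ x then f x else g x) g (Ioo a T) :=
    fun x hx => if_neg (not_le.mpr hx.2)
  have tail : EqOn (fun x => if T ≤ x then f x else g x) f (Ioi T) :=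
    fun x hx => if_pos hx.le
  have hg' : IntegrableOn g (Ioo a T) :=
    ((intervalIntegrable_iff_integrableOn_Ioc_of_le haT).mp hg).mono_set Ioo_subset_Ioc_self
  rw [← Ioc_union_Ioi_eq_Ioi haT, setIntegral_union (Ioc_disjoint_Ioi le_rfl) measurableSet_Ioi
      ((hg'.congr_fun head.symm measurableSet_Ioo).congr_set_ae Ioo_ae_eq_Ioc.symm)
      (hf.congr_fun tail.symm measurableSet_Ioi),
    integral_Ioc_eq_integral_Ioo, setIntegral_congr_fun measurableSet_Ioo head,
    setIntegral_congr_fun measurableSet_Ioi tail, intervalIntegral.integral_of_le haT,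
    integral_Ioc_eq_integral_Ioo]

theorem integral_exp_mul {k : ℝ} (hk : k ≠ 0) (a b : ℝ) :
    ∫ x in a..b, exp (k * x) = (exp (k * b) - exp (k * a)) / k := by
  rw [intervalIntegral.integral_comp_mul_left exp hk, integral_exp, smul_eq_mul,
    inv_mul_eq_div]

theorem exp_mul_mul_log_eq_rpow {x : ℝ} (hx : 0 < x) (k t : ℝ) :
    exp (k * (t * log x)) = x ^ (k * t) := by
  rw [rpow_def_of_pos hx]; ring_nf

/-- Theorem 2 of the paper: averaging the minimum detection error probability (eq. (18))
against the exponential density of the direct channel gain gives the closed form `F_dl`. -/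
theorem integral_min_detection_error_eq_Fdl
    (Pr Pb φ1 N : ℝ) (hPr : 0 < Pr) (hPb : 0 < Pb) (hφ1 : 0 < φ1) (hN : 0 < N)
    (hne : φ1 ≠ N) :
    let α : ℝ := Pb * φ1 / (Pr * N)
    let κ : ℝ := (Pr + Pb) / Pr
    let T : ℝ := (Pr * N / (Pb * φ1)) * Real.log κ
    let ξstar : ℝ → ℝ := fun h =>
      if T ≤ h then Real.exp (-(α * h))
      else 1 - (Pb / Pr) * κ ^ (-((Pr + Pb) / Pb)) * Real.exp (φ1 * h / N)
    ∫ h in Set.Ioi (0 : ℝ), ξstar h * Real.exp (-h) = Fdl Pr Pb φ1 N := by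
  intro α κ T ξstar
  set c := (Pb / Pr) * κ ^ (-((Pr + Pb) / Pb)) with hc
  have hκ : 1 < κ := by rw [lt_div_iff₀ hPr]; linarith
  have hα : 0 < α := by positivity
  have hT : 0 ≤ T := mul_nonneg (by positivity) (log_nonneg hκ.le)
  have hαt : α * (Pr * N / (Pb * φ1)) = 1 := by simp only [α]; field_simp
  have hβ : φ1 / N - 1 ≠ 0 := sub_ne_zero.mpr (by rw [Ne, div_eq_one_iff_eq hN.ne']; exact hne)
  have hintegrand : (fun h => ξstar h * exp (-h)) = fun h =>
      if T ≤ h then exp (-(α + 1) * h) else exp (-1 * h) - c * exp ((φ1 / N - 1) * h) := by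
    funext h
    simp only [ξstar, ← hc, ite_mul, sub_mul, one_mul, mul_assoc, ← exp_add]
    ring_nf
  rw [hintegrand, integral_Ioi_ite_le hT (Continuous.intervalIntegrable (by fun_prop) _ _)
      (integrableOn_exp_mul_Ioi (by linarith) T), integral_exp_mul_Ioi (by linarith),
    intervalIntegral.integral_sub (Continuous.intervalIntegrable (by fun_prop) _ _)
      (Continuous.intervalIntegrable (by fun_prop) _ _), intervalIntegral.integral_const_mul,
    integral_exp_mul (by norm_num), integral_exp_mul hβ]
  have hexp₁ : -(α + 1) * (Pr * N / (Pb * φ1)) = -(1 + Pr * N / (Pb * φ1)) := by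
    linear_combination -hαt
  have hexp₂ : (φ1 / N - 1) * (Pr * N / (Pb * φ1)) = (Pr / Pb) * (1 - N / φ1) := by
    field_simp
  simp only [T, mul_zero, exp_zero, exp_mul_mul_log_eq_rpow (one_pos.trans hκ)]
  rw [hexp₁, hexp₂, neg_one_mul, neg_div_neg_eq, Fdl]
  simp only [c, κ, α]
  ring
end

section
/- For fixed P_r, φ₁, N > 0 with φ₁ ≠ N, the closed-form minimum average detection error probability tends to zero as the covert transmit power grows: F_dl(P_r, P_b) → 0 as P_b → ∞. -/
open Real Filter

/-!
With `κ = (P_r + P_b) / P_r`, every exponent of `F_dl` is `c / P_b` or `-1 + c / P_b` for a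
constant `c`. Since `κ ^ (c / P_b) → 1` (the base grows only linearly in `P_b`) and `κ⁻¹ → 0`,
the first term vanishes, the middle terms cancel to `1 - 1`, and the last one has the factor
`κ ^ (c / P_b) - 1 → 0`.
-/

lemma tendsto_add_div_atTop {r : ℝ} (hr : 0 < r) :
    Tendsto (fun x : ℝ => (r + x) / r) atTop atTop :=
  (tendsto_atTop_add_const_left atTop r tendsto_id).atTop_div_const hr

lemma tendsto_add_div_rpow_div {r : ℝ} (hr : 0 < r) (c : ℝ) :
    Tendsto (fun x : ℝ => ((r + x) / r) ^ (c / x)) atTop (nhds 1) := by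
  refine ((tendsto_rpow_div_mul_add c r (-r) hr.ne).comp (tendsto_add_div_atTop hr)).congr
    fun x => ?_
  simp only [Function.comp_apply]
  congr 2
  field_simp
  ring

lemma Fdl_eq_of_pos {Pr Pb : ℝ} (hPr : 0 < Pr) (hPb : 0 < Pb) (φ1 N : ℝ) :
    Fdl Pr Pb φ1 N =
      ((Pr + Pb) / Pr)⁻¹ * ((Pr + Pb) / Pr) ^ (-(Pr * N / φ1) / Pb) *
          (Pb * φ1 / (Pr * N) + 1)⁻¹ + 1 -
        ((Pr + Pb) / Pr) ^ (-(Pr * N / φ1) / Pb) -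
        (1 - ((Pr + Pb) / Pr)⁻¹) * ((Pr + Pb) / Pr) ^ (-Pr / Pb) / (φ1 / N - 1) *
          (((Pr + Pb) / Pr) ^ (Pr * (1 - N / φ1) / Pb) - 1) := by
  have hκ : 0 < (Pr + Pb) / Pr := by positivity
  have hexp₁ : -(1 + Pr * N / (Pb * φ1)) = -1 + -(Pr * N / φ1) / Pb := by ring
  have hexp₂ : -((Pr + Pb) / Pb) = -1 + -Pr / Pb := by field_simp; ring
  have hexp₃ : -(Pr * N / (Pb * φ1)) = -(Pr * N / φ1) / Pb := by ring
  have hexp₄ : Pr / Pb * (1 - N / φ1) = Pr * (1 - N / φ1) / Pb := by ring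
  have hcoef : Pb / Pr * ((Pr + Pb) / Pr)⁻¹ = 1 - ((Pr + Pb) / Pr)⁻¹ := by
    field_simp; ring
  rw [Fdl, hexp₁, hexp₂, hexp₃, hexp₄, rpow_add hκ, rpow_add hκ, rpow_neg_one, ← mul_assoc,
    hcoef]
  ring

theorem Fdl_tendsto_zero_as_Pb_atTop_general
    (Pr φ1 N : ℝ) (hPr : 0 < Pr) (hφ1 : 0 < φ1) (hN : 0 < N) :
    Tendsto (fun Pb => Fdl Pr Pb φ1 N) atTop (nhds 0) := by
  have hκinv : Tendsto (fun Pb => ((Pr + Pb) / Pr)⁻¹) atTop (nhds 0) :=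
    tendsto_inv_atTop_zero.comp (tendsto_add_div_atTop hPr)
  have hden : Tendsto (fun Pb : ℝ => (Pb * φ1 / (Pr * N) + 1)⁻¹) atTop (nhds 0) :=
    tendsto_inv_atTop_zero.comp <| tendsto_atTop_add_const_right _ 1 <|
      (tendsto_id.atTop_mul_const hφ1).atTop_div_const (by positivity)
  have hpow := tendsto_add_div_rpow_div hPr
  have hfirst := (hκinv.mul (hpow (-(Pr * N / φ1)))).mul hden
  have hlast := (((tendsto_const_nhds (x := (1 : ℝ))).sub hκinv).mul (hpow (-Pr))).div_const
    (φ1 / N - 1) |>.mul ((hpow (Pr * (1 - N / φ1))).sub_const 1)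
  have hlim := ((hfirst.add_const 1).sub (hpow (-(Pr * N / φ1)))).sub hlast
  refine (hlim.congr' ?_).trans_eq (by simp)
  filter_upwards [eventually_gt_atTop 0] with Pb hPb
  exact (Fdl_eq_of_pos hPr hPb φ1 N).symm

/-- Claim 1) of Remark 3 of the paper: the minimum average detection error probability
tends to zero as the covert transmit power grows. -/
theorem Fdl_tendsto_zero_as_Pb_atTop
    (Pr φ1 N : ℝ) (hPr : 0 < Pr) (hφ1 : 0 < φ1) (hN : 0 < N) (hne : φ1 ≠ N) :
    Tendsto (fun Pb => Fdl Pr Pb φ1 N) atTop (nhds 0) :=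
  Fdl_tendsto_zero_as_Pb_atTop_general Pr φ1 N hPr hφ1 hN
end

section
/- For fixed P_b, φ₁, N > 0 with φ₁ ≠ N, the closed-form minimum average detection error probability tends to one as the public transmit power grows: F_dl(P_r, P_b) → 1 as P_r → ∞. -/
open Real Filter

/-!
Every power of `κ = 1 + P_b / P_r` in `F_dl` has an exponent affine in `P_r`, and
`κ ^ (c P_r + d) → exp (c P_b)`. Hence the first two terms both tend to `exp (-N / φ₁)` and
cancel against each other, while the last term is `P_b / P_r → 0` times a convergent factor.
-/

open Topology

theorem tendsto_one_add_div_rpow_mul_add_atTop (b c d : ℝ) :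
    Tendsto (fun x : ℝ => (1 + b / x) ^ (c * x + d)) atTop (𝓝 (exp (b * c))) := by
  have hbase : Tendsto (fun x : ℝ => 1 + b / x) atTop (𝓝 1) := by
    have h : Tendsto (fun x : ℝ => b / x) atTop (𝓝 0) := tendsto_const_nhds.div_atTop tendsto_id
    simpa using h.const_add 1
  have hlim := ((tendsto_one_add_div_rpow_exp b).rpow_const (p := c) (.inl (exp_pos b).ne')).mul
    (hbase.rpow_const (p := d) (.inl one_ne_zero))
  rw [← exp_mul, one_rpow, mul_one] at hlim
  refine hlim.congr' ?_
  filter_upwards [hbase.eventually_const_lt zero_lt_one] with x hx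
  rw [rpow_add hx, mul_comm c x, rpow_mul hx.le]

theorem tendsto_add_div_self_rpow_mul_add_atTop (b c d : ℝ) :
    Tendsto (fun x : ℝ => ((x + b) / x) ^ (c * x + d)) atTop (𝓝 (exp (b * c))) := by
  refine (tendsto_one_add_div_rpow_mul_add_atTop b c d).congr' ?_
  filter_upwards [eventually_ne_atTop 0] with x hx
  rw [add_div, div_self hx]

theorem Fdl_tendsto_one_as_Pr_atTop_general
    (Pb φ1 N : ℝ) :
    Tendsto (fun Pr => Fdl Pr Pb φ1 N) atTop (nhds 1) := by
  have hpow (c d : ℝ) (e : ℝ → ℝ) (he : ∀ Pr, c * Pr + d = e Pr) :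
      Tendsto (fun Pr => ((Pr + Pb) / Pr) ^ e Pr) atTop (𝓝 (exp (Pb * c))) :=
    (tendsto_add_div_self_rpow_mul_add_atTop Pb c d).congr fun Pr => by rw [he]
  have hT1 := hpow (-(N / (Pb * φ1))) (-1) (fun Pr => -(1 + Pr * N / (Pb * φ1))) fun _ => by ring
  have hT2 := hpow (-(N / (Pb * φ1))) 0 (fun Pr => -(Pr * N / (Pb * φ1))) fun _ => by ring
  have hT3 := hpow (-(1 / Pb)) (-(Pb / Pb)) (fun Pr => -((Pr + Pb) / Pb)) fun _ => by ring
  have hT4 := hpow ((1 - N / φ1) / Pb) 0 (fun Pr => Pr / Pb * (1 - N / φ1)) fun _ => by ring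
  have hinv (a : ℝ) : Tendsto (fun Pr : ℝ => a / Pr) atTop (𝓝 0) :=
    tendsto_const_nhds.div_atTop tendsto_id
  have hD : Tendsto (fun Pr => Pb * φ1 / (Pr * N) + 1) atTop (𝓝 (0 + 1)) :=
    ((hinv (Pb * φ1 / N)).add_const 1).congr fun Pr => by ring
  have hlim : Tendsto (fun Pr => Fdl Pr Pb φ1 N) atTop _ :=
    (((hT1.div hD (by norm_num)).add_const 1).sub hT2).sub
      (((hinv Pb |>.mul hT3).div_const (φ1 / N - 1)).mul (hT4.sub_const 1))
  convert hlim using 2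
  ring

/-- Claim 2) of Remark 3 of the paper: the minimum average detection error probability
tends to one as the public transmit power grows. -/
theorem Fdl_tendsto_one_as_Pr_atTop
    (Pb φ1 N : ℝ) (hPb : 0 < Pb) (hφ1 : 0 < φ1) (hN : 0 < N) (hne : φ1 ≠ N) :
    Tendsto (fun Pr => Fdl Pr Pb φ1 N) atTop (nhds 1) :=
  Fdl_tendsto_one_as_Pr_atTop_general Pb φ1 N
end

section
/- For fixed P_r, φ₁, N > 0 with φ₁ ≠ N, the function P_b ↦ F_dl(P_r, P_b) is strictly decreasing on (0, ∞). -/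
/-!
`F_dl` depends on `P_r, P_b` only through `t = P_b / P_r`, and on `φ₁, N` only through
`r = N / φ₁`. With `κ = 1 + t`, `u = κ ^ (-r / t)` and `L = log κ`, its derivative in `t` is
`-(r / κ) * (u / (t + r) ^ 2 + u L / (t (t + r)) - (L / t) * s)`, where `s` is the slope of
`ρ ↦ κ ^ (-ρ / t)` between `r` and `1`. That map is strictly decreasing because `κ > 1`,
so `s < 0` and the derivative is negative.
-/

open Real Filter

open Set

noncomputable def kappaPow (ρ t : ℝ) : ℝ := (1 + t) ^ (-(ρ / t))

theorem kappaPow_pos (ρ : ℝ) {t : ℝ} (ht : 0 < t) : 0 < kappaPow ρ t := by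
  unfold kappaPow; positivity

theorem strictAnti_kappaPow {t : ℝ} (ht : 0 < t) : StrictAnti (kappaPow · t) := fun a b hab =>
  (rpow_lt_rpow_left_iff (by linarith)).2 (neg_lt_neg (div_lt_div_of_pos_right hab ht))

theorem hasDerivAt_kappaPow (ρ : ℝ) {t : ℝ} (ht : 0 < t) :
    HasDerivAt (kappaPow ρ) (ρ * (log (1 + t) - t / (1 + t)) / t ^ 2 * kappaPow ρ t) t := by
  have hbase : HasDerivAt (fun s => 1 + s) 1 t := (hasDerivAt_id t).const_add 1
  have hexp : HasDerivAt (fun s => -(ρ / s)) (ρ / t ^ 2) t := by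
    have hfun : (fun s : ℝ => -(ρ / s)) = fun s => -ρ * s⁻¹ := by funext s; ring
    rw [hfun]
    exact ((hasDerivAt_inv ht.ne').const_mul (-ρ)).congr_deriv (by ring)
  unfold kappaPow
  convert hbase.rpow hexp (by linarith) using 1
  rw [rpow_sub_one (by linarith)]
  field_simp
  ring

noncomputable def normalizedFdl (r t : ℝ) : ℝ :=
  1 - kappaPow r t + r * kappaPow r t / ((t + r) * (1 + t)) -
    r * t * (kappaPow r t - kappaPow 1 t) / ((1 - r) * (1 + t))

theorem Fdl_eq_normalizedFdl {Pr Pb φ1 N : ℝ} (hPr : 0 < Pr) (hPb : 0 < Pb) (hφ1 : φ1 ≠ 0)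
    (hN : N ≠ 0) : Fdl Pr Pb φ1 N = normalizedFdl (N / φ1) (Pb / Pr) := by
  have hκ : (Pr + Pb) / Pr = 1 + Pb / Pr := by field_simp
  have hκpos : 0 < 1 + Pb / Pr := by positivity
  have hPb0 := hPb.ne'
  unfold Fdl normalizedFdl kappaPow
  rw [hκ, show -(1 + Pr * N / (Pb * φ1)) = -(N / φ1 / (Pb / Pr)) + -1 by field_simp; ring,
    show Pr * N / (Pb * φ1) = N / φ1 / (Pb / Pr) by field_simp,
    show -((Pr + Pb) / Pb) = -(1 / (Pb / Pr)) + -1 by field_simp; ring,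
    show Pr / Pb * (1 - N / φ1) = -(N / φ1 / (Pb / Pr)) - -(1 / (Pb / Pr)) by field_simp; ring,
    rpow_add hκpos, rpow_add hκpos, rpow_sub hκpos, rpow_neg_one]
  field_simp
  ring

theorem hasDerivAt_normalizedFdl {r t : ℝ} (hr : 0 < r) (hr1 : r ≠ 1) (ht : 0 < t) :
    HasDerivAt (normalizedFdl r)
      (-(r / (1 + t)) * (kappaPow r t / (t + r) ^ 2 + kappaPow r t * log (1 + t) / (t * (t + r)) -
        log (1 + t) / t * slope (kappaPow · t) r 1)) t := by
  have hu := hasDerivAt_kappaPow r ht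
  have hv := hasDerivAt_kappaPow 1 ht
  have hd1 : HasDerivAt (fun s => (s + r) * (1 + s)) (1 * (1 + t) + (t + r) * 1) t :=
    ((hasDerivAt_id t).add_const r).mul ((hasDerivAt_id t).const_add 1)
  have hd2 : HasDerivAt (fun s => (1 - r) * (1 + s)) ((1 - r) * 1) t :=
    ((hasDerivAt_id t).const_add 1).const_mul (1 - r)
  have h1r : 1 - r ≠ 0 := sub_ne_zero.2 hr1.symm
  have hF := (((hasDerivAt_const t 1).sub hu).add ((hu.const_mul r).div hd1 (by positivity))).sub
    ((((hasDerivAt_id t).const_mul r).mul (hu.sub hv)).div hd2 (by positivity))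
  refine hF.congr_deriv ?_
  simp only [id, Pi.sub_apply, Pi.mul_apply, slope_def_field]
  field_simp
  ring

theorem strictAntiOn_normalizedFdl {r : ℝ} (hr : 0 < r) (hr1 : r ≠ 1) :
    StrictAntiOn (normalizedFdl r) (Ioi 0) := by
  refine strictAntiOn_of_deriv_neg (convex_Ioi 0)
    (fun t ht => (hasDerivAt_normalizedFdl hr hr1 ht).continuousAt.continuousWithinAt)
    fun t ht => ?_
  rw [interior_Ioi, mem_Ioi] at ht
  rw [(hasDerivAt_normalizedFdl hr hr1 ht).deriv]
  have hlog : 0 < log (1 + t) := log_pos (by linarith)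
  have hslope := (strictAnti_kappaPow ht).strictAntiOn univ |>.slope_neg trivial trivial hr1
  have := kappaPow_pos r ht
  exact mul_neg_of_neg_of_pos (neg_neg_of_pos (by positivity))
    (sub_pos.2 ((mul_neg_of_pos_of_neg (by positivity) hslope).trans (by positivity)))

/-- The minimum average detection error probability is strictly decreasing in the covert
transmit power `P_b` (cf. Fig. 2 and Proposition 2 of the paper). -/
theorem Fdl_strictAntiOn_Pb
    (Pr φ1 N : ℝ) (hPr : 0 < Pr) (hφ1 : 0 < φ1) (hN : 0 < N) (hne : φ1 ≠ N) :
    StrictAntiOn (fun Pb => Fdl Pr Pb φ1 N) (Set.Ioi (0 : ℝ)) := by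
  have hr1 : N / φ1 ≠ 1 := fun h => hne ((div_eq_one_iff_eq hφ1.ne').1 h).symm
  intro a ha b hb hab
  simp only [Fdl_eq_normalizedFdl hPr ha hφ1.ne' hN.ne',
    Fdl_eq_normalizedFdl hPr hb hφ1.ne' hN.ne']
  exact strictAntiOn_normalizedFdl (by positivity) hr1 (div_pos ha hPr) (div_pos hb hPr)
    (div_lt_div_of_pos_right hab hPr)
end

section
/- For fixed P_b, φ₁, N > 0 with φ₁ ≠ N, the function P_r ↦ F_dl(P_r, P_b) is strictly increasing on (0, ∞). -/
/-!
Write `t = P_r / P_b`, `a = N / φ₁` and `κ = 1 + t⁻¹`, so that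
`κ ^ (-(s * t)) = exp (-(s * logRate t))`.
The closed form then collapses to `F_dl = 1 - (expTerm a t - a * expTerm 1 t) / (1 - a)`, where
`expTerm s t = κ ^ (-(s * t)) / (1 + s * t)`.
Since `logRate` has derivative `log κ - (1 + t)⁻¹ > 0`, the `t`-derivative of `expTerm s` is
`-s * expTermSlope s t` with `expTermSlope s t` positive and strictly decreasing in `s`.
So the `t`-derivative of the subtracted quotient is
`a * (expTermSlope 1 t - expTermSlope a t) / (1 - a)`, which is negative on either side of `a = 1`.
-/

open Real Filter

open Set

noncomputable def logRate (t : ℝ) : ℝ := t * log (1 + t⁻¹)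

noncomputable def expTerm (s t : ℝ) : ℝ := exp (-(s * logRate t)) / (1 + s * t)

noncomputable def expTermSlope (s t : ℝ) : ℝ :=
  expTerm s t * (log (1 + t⁻¹) - (1 + t)⁻¹ + (1 + s * t)⁻¹)

noncomputable def fdlCompl (a t : ℝ) : ℝ := (expTerm a t - a * expTerm 1 t) / (1 - a)

lemma one_add_inv_rpow {t : ℝ} (ht : 0 < t) (e : ℝ) :
    (1 + t⁻¹) ^ e = exp (e / t * logRate t) := by
  rw [rpow_def_of_pos (by positivity), logRate]
  field_simp

lemma exp_neg_log_one_add_inv {t : ℝ} (ht : 0 < t) : exp (-log (1 + t⁻¹)) = t / (1 + t) := by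
  rw [exp_neg, exp_log (by positivity)]
  field_simp
  ring

lemma Fdl_eq_one_sub_fdlCompl {Pr Pb φ1 N : ℝ} (hPr : 0 < Pr) (hPb : 0 < Pb) (hφ1 : 0 < φ1)
    (hN : 0 < N) (hne : φ1 ≠ N) : Fdl Pr Pb φ1 N = 1 - fdlCompl (N / φ1) (Pr / Pb) := by
  set t := Pr / Pb with ht_def
  set a := N / φ1 with ha_def
  have ht : 0 < t := div_pos hPr hPb
  have hκ : (Pr + Pb) / Pr = 1 + t⁻¹ := by rw [ht_def]; field_simp
  have hR : logRate t / t = log (1 + t⁻¹) := by rw [logRate]; field_simp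
  set u := exp (-(a * logRate t)) with hu
  set v := exp (-(1 * logRate t)) with hv
  have h1 : ((Pr + Pb) / Pr) ^ (-(1 + Pr * N / (Pb * φ1))) = t / (1 + t) * u := by
    rw [hκ, one_add_inv_rpow ht, ← exp_neg_log_one_add_inv ht, ← exp_add, ← hR]
    congr 1; rw [ha_def, ht_def]; field_simp; ring
  have h2 : ((Pr + Pb) / Pr) ^ (-(Pr * N / (Pb * φ1))) = u := by
    rw [hκ, one_add_inv_rpow ht]
    congr 1; rw [ha_def, ht_def]; field_simp
  have h3 : ((Pr + Pb) / Pr) ^ (-((Pr + Pb) / Pb)) = t / (1 + t) * v := by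
    rw [hκ, one_add_inv_rpow ht, ← exp_neg_log_one_add_inv ht, ← exp_add, ← hR]
    congr 1; rw [ht_def]; field_simp; ring
  have h4 : ((Pr + Pb) / Pr) ^ ((Pr / Pb) * (1 - N / φ1)) = u / v := by
    rw [hκ, one_add_inv_rpow ht, ← exp_sub]
    congr 1; rw [ha_def, ht_def]; field_simp; ring
  have ha1 : 1 - a ≠ 0 := by
    rw [ha_def, sub_ne_zero, ne_eq, eq_comm, div_eq_one_iff_eq hφ1.ne']; exact hne.symm
  have h5 : Pb * φ1 / (Pr * N) + 1 = (1 + a * t) / (a * t) := by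
    rw [ha_def, ht_def]; field_simp
  have h6 : Pb / Pr / (φ1 / N - 1) = a / (t * (1 - a)) := by
    rw [ha_def, ht_def]; field_simp
  rw [Fdl, h1, h2, h3, h4, h5, mul_div_right_comm, mul_div_right_comm, h6, fdlCompl, expTerm,
    expTerm, ← hu, ← hv]
  have hv0 : v ≠ 0 := exp_ne_zero _
  have hat : 1 + t * a ≠ 0 := by positivity
  field_simp
  ring

section

variable {s t : ℝ}

lemma inv_one_add_lt_log_one_add_inv (ht : 0 < t) : (1 + t)⁻¹ < log (1 + t⁻¹) := by
  have hx : 0 < (1 + t⁻¹)⁻¹ := by positivity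
  have hx1 : (1 + t⁻¹)⁻¹ ≠ 1 := by
    rw [Ne, inv_eq_one]; simp [ht.ne']
  have key := log_lt_sub_one_of_pos hx hx1
  rw [log_inv] at key
  have : (1 + t⁻¹)⁻¹ = 1 - (1 + t)⁻¹ := by field_simp; ring
  linarith

lemma logRate_pos (ht : 0 < t) : 0 < logRate t :=
  mul_pos ht (log_pos (by simpa using ht))

lemma hasDerivAt_logRate (ht : 0 < t) :
    HasDerivAt logRate (log (1 + t⁻¹) - (1 + t)⁻¹) t := by
  have hlog := ((hasDerivAt_inv ht.ne').const_add 1).log (by positivity)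
  refine ((hasDerivAt_id' t).mul hlog).congr_deriv ?_
  field_simp
  ring

lemma hasDerivAt_expTerm (ht : 0 < t) (hst : 1 + s * t ≠ 0) :
    HasDerivAt (expTerm s) (-(s * expTermSlope s t)) t := by
  have hexp : HasDerivAt (fun y => exp (-(s * logRate y)))
      (exp (-(s * logRate t)) * -(s * (log (1 + t⁻¹) - (1 + t)⁻¹))) t :=
    ((hasDerivAt_logRate ht).const_mul s).neg.exp
  have hden : HasDerivAt (fun y => 1 + s * y) s t := by
    simpa using ((hasDerivAt_id' t).const_mul s).const_add 1
  refine (hexp.div hden hst).congr_deriv ?_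
  simp only [expTermSlope, expTerm]
  field_simp
  ring

lemma expTermSlope_strictAntiOn (ht : 0 < t) : StrictAntiOn (expTermSlope · t) (Ici 0) := by
  intro s hs s' _ hlt
  have hden : 1 + s * t < 1 + s' * t := by gcongr
  have hden0 : 0 < 1 + s * t := by nlinarith [mem_Ici.1 hs]
  have hm : 0 < log (1 + t⁻¹) - (1 + t)⁻¹ := sub_pos.2 (inv_one_add_lt_log_one_add_inv ht)
  have hterm : expTerm s' t < expTerm s t := by
    unfold expTerm
    gcongr
    exact logRate_pos ht
  have hinv : (1 + s' * t)⁻¹ < (1 + s * t)⁻¹ := inv_strictAnti₀ hden0 hden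
  have hden0' : 0 < 1 + s' * t := hden0.trans hden
  exact mul_lt_mul'' hterm (by linarith) (div_nonneg (exp_pos _).le hden0'.le)
    (by linarith [inv_pos.2 hden0'])

lemma hasDerivAt_fdlCompl {a : ℝ} (ht : 0 < t) (hat : 1 + a * t ≠ 0) :
    HasDerivAt (fdlCompl a) (a * (expTermSlope 1 t - expTermSlope a t) / (1 - a)) t := by
  have h1 : (1 : ℝ) + 1 * t ≠ 0 := by positivity
  refine ((hasDerivAt_expTerm ht hat).sub
    ((hasDerivAt_expTerm ht h1).const_mul a)).div_const (1 - a) |>.congr_deriv ?_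
  ring

lemma fdlCompl_strictAntiOn {a : ℝ} (ha : 0 < a) (ha1 : a ≠ 1) :
    StrictAntiOn (fdlCompl a) (Ioi 0) := by
  have hderiv (t : ℝ) (ht : 0 < t) :
      HasDerivAt (fdlCompl a) (a * (expTermSlope 1 t - expTermSlope a t) / (1 - a)) t :=
    hasDerivAt_fdlCompl ht (by positivity)
  refine strictAntiOn_of_deriv_neg (convex_Ioi 0)
    (fun t ht => (hderiv t ht).continuousAt.continuousWithinAt) fun t ht => ?_
  rw [interior_Ioi] at ht
  rw [(hderiv t ht).deriv]
  have hanti := expTermSlope_strictAntiOn ht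
  rcases ha1.lt_or_gt with hlt | hgt
  · exact div_neg_of_neg_of_pos
      (mul_neg_of_pos_of_neg ha (sub_neg.2 (hanti ha.le (mem_Ici.2 zero_le_one) hlt)))
      (sub_pos.2 hlt)
  · exact div_neg_of_pos_of_neg
      (mul_pos ha (sub_pos.2 (hanti (mem_Ici.2 zero_le_one) ha.le hgt))) (sub_neg.2 hgt)

end

/-- The minimum average detection error probability is strictly increasing in the public
transmit power `P_r` (cf. Fig. 2 of the paper). -/
theorem Fdl_strictMonoOn_Pr
    (Pb φ1 N : ℝ) (hPb : 0 < Pb) (hφ1 : 0 < φ1) (hN : 0 < N) (hne : φ1 ≠ N) :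
    StrictMonoOn (fun Pr => Fdl Pr Pb φ1 N) (Set.Ioi (0 : ℝ)) := by
  have ha1 : N / φ1 ≠ 1 := by
    rw [ne_eq, div_eq_one_iff_eq hφ1.ne']; exact hne.symm
  intro Pr hPr Pr' hPr' hlt
  have hanti := fdlCompl_strictAntiOn (div_pos hN hφ1) ha1
    (div_pos hPr hPb) (div_pos hPr' hPb) (div_lt_div_of_pos_right hlt hPb)
  simp only [Fdl_eq_one_sub_fdlCompl hPr hPb hφ1 hN hne,
    Fdl_eq_one_sub_fdlCompl hPr' hPb hφ1 hN hne]
  linarith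
end

section
/- Let P_max > 0 and fix φ₁, N > 0 with φ₁ ≠ N. Then the function P_b ↦ F_dl(P_max − P_b, P_b) is strictly decreasing on the interval (0, P_max). -/
/-!
`Fdl` depends only on `m = P_b / P_r` and `a = N / φ₁`. Writing the powers of `κ = 1 + m` as
`e_c = (1 + m) ^ (-c / m) = exp (-c · log (1 + m) / m)` (`decay c m`), it becomes
`1 - m / (1 + m) · ((a e₁ - e_a) / (a - 1) + e_a / (a + m))`, whose derivative in `m` is
`-a / (1 + m) · (log (1 + m) / m · (e₁ - e_a) / (a - 1)`
`  + e_a · (log (1 + m) / (m (a + m)) + 1 / (a + m)²))`.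
This is negative because `c ↦ e_c` is decreasing, so `(e₁ - e_a) / (a - 1) > 0`. Along
`P_r + P_b = P_max` the ratio `m = P_b / (P_max - P_b)` increases with `P_b`.
-/

open Real Filter

open Set

noncomputable def decay (c m : ℝ) : ℝ := exp (-(c * (log (1 + m) / m)))

noncomputable def FdlNormalized (a m : ℝ) : ℝ :=
  1 - m / (1 + m) * ((a * decay 1 m - decay a m) / (a - 1) + decay a m / (a + m))

lemma decay_pos (c m : ℝ) : 0 < decay c m := exp_pos _

lemma Fdl_eq_Fdl_one_div {Pr Pb φ1 N : ℝ} (hPr : Pr ≠ 0) (hPb : Pb ≠ 0) (hφ1 : φ1 ≠ 0)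
    (hN : N ≠ 0) : Fdl Pr Pb φ1 N = Fdl 1 (Pb / Pr) 1 (N / φ1) := by
  simp only [Fdl]
  rw [show Pb / Pr * 1 / (1 * (N / φ1)) = Pb * φ1 / (Pr * N) by field_simp,
    show 1 * (N / φ1) / (Pb / Pr * 1) = Pr * N / (Pb * φ1) by field_simp,
    show (1 + Pb / Pr) / (Pb / Pr) = (Pr + Pb) / Pb by field_simp,
    show (1 + Pb / Pr) / 1 = (Pr + Pb) / Pr by field_simp,
    div_one, div_one, one_div_div, one_div_div]

lemma rpow_neg_div_eq_decay (c : ℝ) {m : ℝ} (h1m : 0 < 1 + m) :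
    (1 + m) ^ (-(c / m)) = decay c m := by
  rw [rpow_def_of_pos h1m, decay]
  congr 1
  ring

lemma Fdl_one_eq_FdlNormalized {a m : ℝ} (ha : 0 < a) (ha1 : a ≠ 1) (hm : 0 < m) :
    Fdl 1 m 1 a = FdlNormalized a m := by
  have h1m : 0 < 1 + m := by linarith
  simp only [Fdl, FdlNormalized, one_mul, mul_one, div_one]
  rw [show -(1 + a / m) = -(a / m) - 1 by ring,
    show -((1 + m) / m) = -(1 / m) - 1 by field_simp; ring,
    show 1 / m * (1 - a) = -(a / m) - -(1 / m) by ring]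
  simp only [rpow_sub h1m, rpow_one, rpow_neg_div_eq_decay _ h1m]
  have hE1 := decay_pos 1 m
  have ha1' : a - 1 ≠ 0 := sub_ne_zero.mpr ha1
  field_simp
  ring

lemma hasDerivAt_log_one_add_div {m : ℝ} (hm : m ≠ 0) (h1m : 1 + m ≠ 0) :
    HasDerivAt (fun x => log (1 + x) / x) ((m / (1 + m) - log (1 + m)) / m ^ 2) m := by
  refine ((((hasDerivAt_id m).const_add 1).log h1m).div (hasDerivAt_id m) hm).congr_deriv ?_
  simp only [id]
  ring

lemma hasDerivAt_decay (c : ℝ) {m : ℝ} (hm : m ≠ 0) (h1m : 1 + m ≠ 0) :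
    HasDerivAt (decay c) (c * ((log (1 + m) - m / (1 + m)) / m ^ 2) * decay c m) m := by
  refine ((hasDerivAt_log_one_add_div hm h1m).const_mul c).neg.exp.congr_deriv ?_
  simp only [decay, Pi.neg_apply]
  ring

lemma hasDerivAt_FdlNormalized {a m : ℝ} (ha1 : a ≠ 1) (hm : 0 < m) (ham : a + m ≠ 0) :
    HasDerivAt (FdlNormalized a)
      (-(a / (1 + m)) * (log (1 + m) / m * ((decay 1 m - decay a m) / (a - 1)) +
        decay a m * (log (1 + m) / (m * (a + m)) + 1 / (a + m) ^ 2))) m := by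
  have h1m : 1 + m ≠ 0 := by positivity
  have hE1 := hasDerivAt_decay 1 hm.ne' h1m
  have hEa := hasDerivAt_decay a hm.ne' h1m
  have hB := (((hE1.const_mul a).sub hEa).div_const (a - 1)).add
    (hEa.div ((hasDerivAt_id m).const_add a) ham)
  have hw := (hasDerivAt_id m).div ((hasDerivAt_id m).const_add 1) h1m
  refine ((hw.mul hB).const_sub 1).congr_deriv ?_
  have ha1' : a - 1 ≠ 0 := sub_ne_zero.mpr ha1
  simp only [id, Pi.add_apply, Pi.sub_apply, Pi.div_apply]
  field_simp
  ring

lemma decay_sub_div_pos {a m : ℝ} (ha1 : a ≠ 1) (hm : 0 < m) :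
    0 < (decay 1 m - decay a m) / (a - 1) := by
  have hq : 0 < log (1 + m) / m := div_pos (log_pos (by linarith)) hm
  rcases lt_or_gt_of_ne ha1 with hlt | hgt
  · refine div_pos_of_neg_of_neg (sub_neg.mpr (exp_lt_exp.mpr ?_)) (by linarith)
    nlinarith
  · refine div_pos (sub_pos.mpr (exp_lt_exp.mpr ?_)) (by linarith)
    nlinarith

lemma FdlNormalized_strictAntiOn {a : ℝ} (ha : 0 < a) (ha1 : a ≠ 1) :
    StrictAntiOn (FdlNormalized a) (Ioi 0) := by
  have hderiv (m : ℝ) (hm : 0 < m) := hasDerivAt_FdlNormalized ha1 hm (by positivity)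
  refine strictAntiOn_of_hasDerivWithinAt_neg (convex_Ioi 0)
    (fun m hm => (hderiv m hm).continuousAt.continuousWithinAt)
    (fun m hm => (hderiv m (interior_Ioi.subset hm)).hasDerivWithinAt) fun m hm => ?_
  rw [interior_Ioi, mem_Ioi] at hm
  have hL : 0 < log (1 + m) := log_pos (by linarith)
  refine mul_neg_of_neg_of_pos (by simp only [neg_lt_zero]; positivity) (add_pos ?_ ?_)
  · exact mul_pos (by positivity) (decay_sub_div_pos ha1 hm)
  · exact mul_pos (decay_pos a m) (by positivity)

lemma strictMonoOn_div_sub {c : ℝ} (hc : 0 < c) :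
    StrictMonoOn (fun x => x / (c - x)) (Iio c) := by
  intro x hx y hy hxy
  have hx : 0 < c - x := sub_pos.mpr hx
  have hy : 0 < c - y := sub_pos.mpr hy
  simp only
  rw [div_lt_div_iff₀ hx hy]
  nlinarith

/-- Proposition 2 of the paper: with total power `P_r + P_b = P_max`, the minimum average
detection error probability is strictly decreasing in `P_b`. -/
theorem Fdl_strictAntiOn_total_power
    (Pmax φ1 N : ℝ) (hPmax : 0 < Pmax) (hφ1 : 0 < φ1) (hN : 0 < N) (hne : φ1 ≠ N) :
    StrictAntiOn (fun Pb => Fdl (Pmax - Pb) Pb φ1 N) (Set.Ioo (0 : ℝ) Pmax) := by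
  have ha : 0 < N / φ1 := div_pos hN hφ1
  have ha1 : N / φ1 ≠ 1 := fun h => hne ((div_eq_one_iff_eq hφ1.ne').mp h).symm
  have hratio : MapsTo (fun Pb => Pb / (Pmax - Pb)) (Ioo 0 Pmax) (Ioi 0) :=
    fun Pb hPb => div_pos hPb.1 (sub_pos.mpr hPb.2)
  refine ((FdlNormalized_strictAntiOn ha ha1).comp_strictMonoOn
    ((strictMonoOn_div_sub hPmax).mono Ioo_subset_Iio_self) hratio).congr fun Pb hPb => ?_
  have hPr : 0 < Pmax - Pb := sub_pos.mpr hPb.2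
  rw [Function.comp_apply, Fdl_eq_Fdl_one_div hPr.ne' hPb.1.ne' hφ1.ne' hN.ne',
    Fdl_one_eq_FdlNormalized ha ha1 (hratio hPb)]
end

section
/- Set κ̃ = (P̃_r·m₁ + P̃_b·m₂)/(P̃_r·m₁) and define τ* = σ² + P̃_r·w₁ + P̃_b·w₂ if w₂ ≥ (P̃_r·m₁/P̃_b)·ln κ̃, and τ* = σ² + P̃_r·w₁ − P̃_r·(m₁/m₂)·w₂ + (P̃_r·m₁·(P̃_r·m₁ + P̃_b·m₂)/(P̃_b·m₂))·ln κ̃ otherwise. Then τ* is a global minimizer of the uplink detection error probability: ξ_ul(τ*) ≤ ξ_ul(τ) for every τ ∈ ℝ. -/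
open Real

/-- `ν₃(τ)` of the paper (eq. (27)). -/
noncomputable def nu3 (Pr m1 w1 σ2 τ : ℝ) : ℝ :=
  Real.exp ((σ2 + Pr * w1 - τ) / (Pr * m1))

/-- `ν₄(τ)` of the paper (eq. (28)). -/
noncomputable def nu4 (Pr Pb m1 m2 w1 w2 σ2 τ : ℝ) : ℝ :=
  Real.exp ((σ2 + Pr * w1 + Pb * w2 - τ) / (Pr * m1 + Pb * m2))

/-- The uplink detection error probability `ξ_{w,ul}(τ)` of the paper (eq. (30)). -/
noncomputable def xiUl (Pr Pb m1 m2 w1 w2 σ2 τ : ℝ) : ℝ :=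
  if τ < σ2 + Pr * w1 then 1
  else if τ ≤ σ2 + Pr * w1 + Pb * w2 then nu3 Pr m1 w1 σ2 τ
  else 1 + nu3 Pr m1 w1 σ2 τ - nu4 Pr Pb m1 m2 w1 w2 σ2 τ

/-! Write `a = P̃_r m₁ < b = P̃_r m₁ + P̃_b m₂`. Convexity of `exp` gives
`a (1 - e^{-u/a}) ≤ b (1 - e^{-u/b})` for every real `u`, and hence, for any `τ₀`,
`ν₃ - ν₄` at `τ` is at least its value at `τ₀` plus `(ν₄(τ₀) - (b/a) ν₃(τ₀)) (1 - e^{-(τ-τ₀)/b})`.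
At the stationary point of `ν₃ - ν₄` the correction vanishes, so the tail `1 + ν₃ - ν₄` is
globally minimal there; if instead `ν₄ ≥ (b/a) ν₃` already at the right breakpoint, the tail is
nondecreasing to its right, and `ξ_ul` is nonincreasing to its left. -/

section DetectionError

variable {a b : ℝ}

lemma mul_one_sub_exp_neg_div_le (ha : 0 < a) (hab : a ≤ b) (u : ℝ) :
    a * (1 - exp (-u / a)) ≤ b * (1 - exp (-u / b)) := by
  have hb : 0 < b := ha.trans_le hab
  have hconv := convexOn_exp.2 (Set.mem_univ (-u / a)) (Set.mem_univ 0)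
    (div_nonneg ha.le hb.le) (sub_nonneg.2 ((div_le_one hb).2 hab)) (add_sub_cancel _ 1)
  have hpoint : a / b * (-u / a) + (1 - a / b) * 0 = -u / b := by field_simp; ring
  simp only [smul_eq_mul, hpoint, exp_zero, mul_one] at hconv
  have hscaled := mul_le_mul_of_nonneg_left hconv hb.le
  rw [mul_add, ← mul_assoc, mul_div_cancel₀ a hb.ne', mul_sub, mul_one,
    mul_div_cancel₀ a hb.ne'] at hscaled
  linarith

/-- `ν₃ - ν₄` in terms of `a = P̃_r m₁`, `b = P̃_r m₁ + P̃_b m₂`, `A = σ² + P̃_r w₁` and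
`B = σ² + P̃_r w₁ + P̃_b w₂`. -/
noncomputable def expGap (a b A B τ : ℝ) : ℝ :=
  exp ((A - τ) / a) - exp ((B - τ) / b)

noncomputable def detectionError (a b A B τ : ℝ) : ℝ :=
  if τ < A then 1 else if τ ≤ B then exp ((A - τ) / a) else 1 + expGap a b A B τ

/-- `B` when `1 + expGap` is nondecreasing at `B`, otherwise the stationary point of `expGap`. -/
noncomputable def optThreshold (a b A B : ℝ) : ℝ :=
  if a * log (b / a) ≤ B - A then B else (a * b * log (b / a) + b * A - a * B) / (b - a)

theorem xiUl_eq_detectionError (Pr Pb m1 m2 w1 w2 σ2 τ : ℝ) :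
    xiUl Pr Pb m1 m2 w1 w2 σ2 τ =
      detectionError (Pr * m1) (Pr * m1 + Pb * m2) (σ2 + Pr * w1) (σ2 + Pr * w1 + Pb * w2) τ := by
  simp only [xiUl, nu3, nu4, detectionError, expGap, add_sub_assoc]

variable {A B : ℝ}

lemma expGap_add_le (ha : 0 < a) (hab : a ≤ b) (τ₀ τ : ℝ) :
    expGap a b A B τ₀ + (exp ((B - τ₀) / b) - b / a * exp ((A - τ₀) / a)) *
      (1 - exp (-(τ - τ₀) / b)) ≤ expGap a b A B τ := by
  set α := exp ((A - τ₀) / a)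
  set β := exp ((B - τ₀) / b)
  have hshift : expGap a b A B τ = α * exp (-(τ - τ₀) / a) - β * exp (-(τ - τ₀) / b) := by
    simp only [expGap, α, β, ← exp_add]
    ring_nf
  have hkey := mul_le_mul_of_nonneg_left (mul_one_sub_exp_neg_div_le ha hab (τ - τ₀))
    (div_nonneg (exp_pos _).le ha.le : 0 ≤ α / a)
  rw [hshift, expGap]
  field_simp at hkey ⊢
  nlinarith [hkey]

lemma exp_le_detectionError (ha : 0 < a) (hAB : A ≤ B) {τ : ℝ} (hτ : τ ≤ B) :
    exp ((A - B) / a) ≤ detectionError a b A B τ := by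
  unfold detectionError
  split_ifs with hτA
  · exact exp_le_one_iff.2 (div_nonpos_of_nonpos_of_nonneg (by linarith) ha.le)
  · gcongr

lemma one_add_expGap_le_detectionError (hb : 0 ≤ b) {τ : ℝ} (hτ : A ≤ τ) :
    1 + expGap a b A B τ ≤ detectionError a b A B τ := by
  unfold detectionError expGap
  split_ifs with hτA hτB
  · linarith
  · linarith [one_le_exp (div_nonneg (sub_nonneg.2 hτB) hb)]
  · rfl

lemma detectionError_le_of_log_le (ha : 0 < a) (hab : a ≤ b) (h : a * log (b / a) ≤ B - A)
    (τ : ℝ) : detectionError a b A B B ≤ detectionError a b A B τ := by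
  have hb : 0 < b := ha.trans_le hab
  have hAB : A ≤ B := by
    nlinarith [log_nonneg ((one_le_div ha).2 hab)]
  have hB : detectionError a b A B B = exp ((A - B) / a) := by
    simp only [detectionError, not_lt.2 hAB, le_refl, if_true, if_false]
  rw [hB]
  rcases le_or_gt τ B with hτ | hτ
  · exact exp_le_detectionError ha hAB hτ
  have hexp : b / a * exp ((A - B) / a) ≤ 1 := by
    have hlog : log (b / a) ≤ (B - A) / a := (le_div_iff₀ ha).2 (by linarith)
    calc b / a * exp ((A - B) / a) = exp (log (b / a) + (A - B) / a) := by
          rw [exp_add, exp_log (div_pos hb ha)]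
      _ ≤ 1 := exp_le_one_iff.2 (by rw [← neg_sub B A, neg_div]; linarith)
  have hcorr : 0 ≤ (exp ((B - B) / b) - b / a * exp ((A - B) / a)) * (1 - exp (-(τ - B) / b)) := by
    refine mul_nonneg (by simpa using hexp) (sub_nonneg.2 (exp_le_one_iff.2 ?_))
    exact div_nonpos_of_nonpos_of_nonneg (by linarith) hb.le
  calc exp ((A - B) / a) = 1 + expGap a b A B B := by simp [expGap]
    _ ≤ 1 + expGap a b A B τ := by linarith [expGap_add_le (A := A) (B := B) ha hab B τ]
    _ ≤ detectionError a b A B τ := one_add_expGap_le_detectionError hb.le (by linarith)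

lemma detectionError_le_of_lt_log (ha : 0 < a) (hab : a < b) (h : B - A < a * log (b / a))
    (τ : ℝ) :
    detectionError a b A B ((a * b * log (b / a) + b * A - a * B) / (b - a)) ≤
      detectionError a b A B τ := by
  set τ₀ := (a * b * log (b / a) + b * A - a * B) / (b - a) with hτ₀_def
  have hb : 0 < b := ha.trans hab
  have hlog : 0 < log (b / a) := log_pos ((one_lt_div ha).2 hab)
  have hBτ₀ : B < τ₀ := by
    rw [hτ₀_def, lt_div_iff₀ (sub_pos.2 hab)]
    nlinarith [mul_pos hb (sub_pos.2 h)]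
  have hAτ₀ : A < τ₀ := by
    rw [hτ₀_def, lt_div_iff₀ (sub_pos.2 hab)]
    nlinarith [mul_pos ha (sub_pos.2 h), mul_pos (sub_pos.2 hab) hlog]
  have hstat : exp ((B - τ₀) / b) = b / a * exp ((A - τ₀) / a) := by
    have hexponent : (B - τ₀) / b = log (b / a) + (A - τ₀) / a := by
      rw [hτ₀_def]
      field_simp [(sub_pos.2 hab).ne']
      ring
    rw [hexponent, exp_add, exp_log (div_pos hb ha)]
  have hmin : expGap a b A B τ₀ ≤ expGap a b A B τ := by
    simpa [hstat] using expGap_add_le (A := A) (B := B) ha hab.le τ₀ τ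
  have hneg : expGap a b A B τ₀ ≤ 0 := by
    rw [expGap, hstat, ← one_sub_mul]
    exact mul_nonpos_of_nonpos_of_nonneg (by linarith [(one_lt_div ha).2 hab]) (exp_pos _).le
  have hvalue : detectionError a b A B τ₀ = 1 + expGap a b A B τ₀ := by
    simp only [detectionError, not_lt.2 hAτ₀.le, not_le.2 hBτ₀, if_false]
  rw [hvalue]
  rcases lt_or_ge τ A with hτ | hτ
  · simp only [detectionError, hτ, if_true]
    linarith
  · linarith [one_add_expGap_le_detectionError (a := a) (B := B) hb.le hτ]

theorem detectionError_optThreshold_le (ha : 0 < a) (hab : a < b) (τ : ℝ) :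
    detectionError a b A B (optThreshold a b A B) ≤ detectionError a b A B τ := by
  unfold optThreshold
  split_ifs with h
  · exact detectionError_le_of_log_le ha hab.le h τ
  · exact detectionError_le_of_lt_log ha hab (not_le.1 h) τ

end DetectionError

theorem optimal_threshold_minimizes_xiUl_general
    (Pr Pb m1 m2 w1 w2 σ2 : ℝ) (hPr : 0 < Pr) (hPb : 0 < Pb)
    (hm1 : 0 < m1) (hm2 : 0 < m2) :
    let κ : ℝ := (Pr * m1 + Pb * m2) / (Pr * m1)
    let τstar : ℝ :=
      if w2 ≥ (Pr * m1 / Pb) * Real.log κ then σ2 + Pr * w1 + Pb * w2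
      else σ2 + Pr * w1 - Pr * (m1 / m2) * w2 +
        (Pr * m1 * (Pr * m1 + Pb * m2) / (Pb * m2)) * Real.log κ
    ∀ τ : ℝ, xiUl Pr Pb m1 m2 w1 w2 σ2 τstar ≤ xiUl Pr Pb m1 m2 w1 w2 σ2 τ := by
  intro κ τstar τ
  have hcond : w2 ≥ Pr * m1 / Pb * log κ ↔
      Pr * m1 * log κ ≤ σ2 + Pr * w1 + Pb * w2 - (σ2 + Pr * w1) := by
    rw [ge_iff_le, div_mul_eq_mul_div, div_le_iff₀ hPb]
    constructor <;> intro <;> linarith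
  have hτstar : τstar =
      optThreshold (Pr * m1) (Pr * m1 + Pb * m2) (σ2 + Pr * w1) (σ2 + Pr * w1 + Pb * w2) := by
    simp only [τstar, optThreshold, hcond, show (Pr * m1 + Pb * m2) / (Pr * m1) = κ from rfl]
    split_ifs
    · rfl
    · generalize log κ = L
      field_simp
      ring
  rw [hτstar, xiUl_eq_detectionError, xiUl_eq_detectionError]
  exact detectionError_optThreshold_le (by positivity) (by linarith [mul_pos hPb hm2]) τ

/-- Theorem 3 of the paper: the optimal detection threshold `τ*` globally minimizes the
uplink detection error probability. -/
theorem optimal_threshold_minimizes_xiUl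
    (Pr Pb m1 m2 w1 w2 σ2 : ℝ) (hPr : 0 < Pr) (hPb : 0 < Pb)
    (hm1 : 0 < m1) (hm2 : 0 < m2) (hw1 : 0 ≤ w1) (hw2 : 0 ≤ w2) (hσ2 : 0 ≤ σ2) :
    let κ : ℝ := (Pr * m1 + Pb * m2) / (Pr * m1)
    let τstar : ℝ :=
      if w2 ≥ (Pr * m1 / Pb) * Real.log κ then σ2 + Pr * w1 + Pb * w2
      else σ2 + Pr * w1 - Pr * (m1 / m2) * w2 +
        (Pr * m1 * (Pr * m1 + Pb * m2) / (Pb * m2)) * Real.log κ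
    ∀ τ : ℝ, xiUl Pr Pb m1 m2 w1 w2 σ2 τstar ≤ xiUl Pr Pb m1 m2 w1 w2 σ2 τ :=
  optimal_threshold_minimizes_xiUl_general Pr Pb m1 m2 w1 w2 σ2 hPr hPb hm1 hm2
end

section
/- For fixed P̃_b, φ₂, φ₃, φ₄, N > 0 with φ₄ = φ₂·φ₃ and φ₄ ≠ N, the closed-form minimum average detection error probability tends to one as the public transmit power grows: F_ul(P̃_r, P̃_b) → 1 as P̃_r → ∞. -/
open Real Filter MeasureTheory

/-- The closed-form minimum average detection error probability of Theorem 4 of the paper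
(eq. (32)). -/
noncomputable def Ful (Pr Pb φ2 φ3 φ4 N : ℝ) : ℝ :=
  ((Pr * φ2 + Pb) / (Pr * φ2)) ^ (-(1 + Pr * N / (Pb * φ3))) / (Pb * φ3 / (Pr * N) + 1) +
    1 - ((Pr * φ2 + Pb) / (Pr * φ2)) ^ (-(Pr * N / (Pb * φ3))) -
    ((Pb / (Pr * φ2)) * ((Pr * φ2 + Pb) / (Pr * φ2)) ^ (-((Pr * φ2 + Pb) / Pb)) /
        (φ4 / N - 1)) *
      (((Pr * φ2 + Pb) / (Pr * φ2)) ^ ((Pr / Pb) * (φ2 - N / φ3)) - 1)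

/-!
Writing `κ̃ = 1 + (P̃_b/φ₂)/P̃_r`, every power `κ̃ ^ (a P̃_r + b)` occurring in `Ful` converges to
`exp (a P̃_b/φ₂)`. The first and third terms therefore have the same limit and cancel, while the
last term is `P̃_b/(P̃_r φ₂) → 0` times a convergent factor, leaving the constant `1`.
-/

open Topology

lemma tendsto_one_add_div_rpow_affine (c a b : ℝ) :
    Tendsto (fun x : ℝ => (1 + c / x) ^ (a * x + b)) atTop (𝓝 (exp (c * a))) := by
  have hbase : Tendsto (fun x : ℝ => 1 + c / x) atTop (𝓝 1) := by
    simpa using tendsto_const_nhds.add ((tendsto_const_nhds (x := c)).div_atTop tendsto_id)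
  have hlim : Tendsto (fun x : ℝ => ((1 + c / x) ^ x) ^ a * (1 + c / x) ^ b) atTop
      (𝓝 (exp c ^ a * 1 ^ b)) :=
    ((tendsto_one_add_div_rpow_exp c).rpow_const (Or.inl (exp_pos c).ne')).mul
      (hbase.rpow_const (Or.inl one_ne_zero))
  rw [one_rpow, mul_one, ← exp_mul] at hlim
  refine hlim.congr' ?_
  filter_upwards [hbase.eventually (eventually_gt_nhds one_pos)] with x hx
  rw [rpow_add hx, mul_comm a x, rpow_mul hx.le]

lemma tendsto_add_div_self_mul_rpow_affine {φ : ℝ} (hφ : φ ≠ 0) (P a b : ℝ) :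
    Tendsto (fun x : ℝ => ((x * φ + P) / (x * φ)) ^ (a * x + b)) atTop
      (𝓝 (exp (P / φ * a))) :=
  (tendsto_one_add_div_rpow_affine (P / φ) a b).congr' <| by
    filter_upwards [eventually_ne_atTop 0] with x hx
    rw [show (x * φ + P) / (x * φ) = 1 + P / φ / x by field_simp]

lemma tendsto_const_div_mul_atTop (c d : ℝ) :
    Tendsto (fun x : ℝ => c / (x * d)) atTop (𝓝 0) := by
  simp only [div_mul_eq_div_div_swap]
  exact tendsto_const_nhds.div_atTop tendsto_id

theorem Ful_tendsto_one_as_Pr_atTop_general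
    (Pb φ2 φ3 φ4 N : ℝ) (hPb : 0 < Pb)
    (hφ2 : 0 < φ2) :
    Tendsto (fun Pr => Ful Pr Pb φ2 φ3 φ4 N) atTop (nhds 1) := by
  have hκ := tendsto_add_div_self_mul_rpow_affine hφ2.ne' Pb
  set κ : ℝ → ℝ := fun Pr => (Pr * φ2 + Pb) / (Pr * φ2)
  set s := N / (Pb * φ3)
  have h₁ : Tendsto (fun Pr => κ Pr ^ (-(1 + Pr * N / (Pb * φ3)))) atTop
      (𝓝 (exp (Pb / φ2 * -s))) :=
    (hκ (-s) (-1)).congr fun Pr => by simp only [κ, s]; congr 1; ring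
  have h₂ : Tendsto (fun Pr => κ Pr ^ (-(Pr * N / (Pb * φ3)))) atTop
      (𝓝 (exp (Pb / φ2 * -s))) :=
    (hκ (-s) 0).congr fun Pr => by simp only [κ, s]; congr 1; ring
  have h₃ : Tendsto (fun Pr => κ Pr ^ (-((Pr * φ2 + Pb) / Pb))) atTop
      (𝓝 (exp (Pb / φ2 * -(φ2 / Pb)))) :=
    (hκ (-(φ2 / Pb)) (-1)).congr fun Pr => by simp only [κ]; congr 1; field_simp; ring
  have h₄ : Tendsto (fun Pr => κ Pr ^ ((Pr / Pb) * (φ2 - N / φ3))) atTop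
      (𝓝 (exp (Pb / φ2 * ((φ2 - N / φ3) / Pb)))) :=
    (hκ ((φ2 - N / φ3) / Pb) 0).congr fun Pr => by simp only [κ]; congr 1; field_simp; ring
  have hlim := ((h₁.div ((tendsto_const_div_mul_atTop (Pb * φ3) N).add_const 1) (by norm_num)
    |>.add_const 1).sub h₂).sub
    (((tendsto_const_div_mul_atTop Pb φ2).mul h₃ |>.div_const (φ4 / N - 1)).mul
      (h₄.sub_const 1))
  convert hlim using 2
  · rfl
  · ring

/-- Claim 2) of Remark 5 of the paper: the uplink minimum average detection error
probability tends to one as the public transmit power grows. -/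
theorem Ful_tendsto_one_as_Pr_atTop
    (Pb φ2 φ3 φ4 N : ℝ) (hPb : 0 < Pb)
    (hφ2 : 0 < φ2) (hφ3 : 0 < φ3) (hφ4 : 0 < φ4) (hN : 0 < N)
    (hprod : φ4 = φ2 * φ3) (hne : φ4 ≠ N) :
    Tendsto (fun Pr => Ful Pr Pb φ2 φ3 φ4 N) atTop (nhds 1) :=
  Ful_tendsto_one_as_Pr_atTop_general Pb φ2 φ3 φ4 N hPb hφ2
end
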